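/- arXiv:1609.01562 — 2 statements merged into one kernel-verified Lean document; each statement's English description precedes it below -/
import Mathlib

section
/- Let n ≥ 3 be odd. In D_{2n} = ⟨a, s : a^{2n} = s^2 = (as)^2 = 1⟩, the tuple (a^n, a^n, s, a^2 s, a^2) is a generating vector of type (0; 2,2,2,2,n): the five elements generate D_{2n}, the first four have order 2, the fifth has order n, and their product is the identity. -/
/-!
The orders and the product relation are direct computations with `r i * r j = r (i + j)` and
`r i * sr j = sr (j - i)`. For generation, `n` odd makes `a` itself a word in `a^2` and `a^n`,
and `a`, `s` generate the whole dihedral group.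
-/

theorem Subgroup.mem_of_sq_mem_of_pow_mem_of_odd {G : Type*} [Group G] {H : Subgroup G} {x : G}
    {n : ℕ} (hn : Odd n) (hsq : x ^ 2 ∈ H) (hpow : x ^ n ∈ H) : x ∈ H := by
  obtain ⟨k, rfl⟩ := hn
  have hx : x = ((x ^ 2) ^ k)⁻¹ * x ^ (2 * k + 1) := by
    rw [eq_inv_mul_iff_mul_eq, ← pow_mul, ← pow_succ]
  rw [hx]
  exact mul_mem (inv_mem (pow_mem hsq k)) hpow

namespace DihedralGroup

variable {m : ℕ}

theorem orderOf_r_one_pow_of_dvd {k : ℕ} (hk : k ≠ 0) (hkm : k ∣ m) :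
    orderOf (r 1 ^ k : DihedralGroup m) = m / k := by
  rw [orderOf_pow_of_dvd hk (orderOf_r_one ▸ hkm), orderOf_r_one]

theorem orderOf_r_one_pow_mul_sr (k : ℕ) (i : ZMod m) : orderOf (r 1 ^ k * sr i) = 2 := by
  rw [r_one_pow, r_mul_sr]
  exact orderOf_sr _

theorem sr_zero_mul_r_one_pow_mul_sr_zero_mul_r_one_pow (k : ℕ) :
    (sr 0 : DihedralGroup m) * (r 1 ^ k * sr 0) * r 1 ^ k = 1 := by
  rw [r_one_pow, r_mul_sr, sr_mul_sr, r_mul_r, one_def]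
  ring_nf

theorem closure_r_one_sr_zero :
    Subgroup.closure {r 1, sr 0} = (⊤ : Subgroup (DihedralGroup m)) := by
  rw [eq_top_iff]
  rintro x -
  have hr : ∀ i : ZMod m, r i ∈ Subgroup.closure {r 1, sr 0} := fun i => by
    obtain ⟨k, rfl⟩ := ZMod.intCast_surjective i
    rw [← r_one_zpow]
    exact zpow_mem (Subgroup.subset_closure (by simp)) _
  cases x with
  | r i => exact hr i
  | sr i =>
    rw [← zero_add i, ← sr_mul_r]
    exact mul_mem (Subgroup.subset_closure (by simp)) (hr i)

end DihedralGroup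

open DihedralGroup

theorem stmt_7_general (n : ℕ) (hodd : Odd n) :
    orderOf ((r 1 : DihedralGroup (2 * n)) ^ n) = 2 ∧
    orderOf (sr 0 : DihedralGroup (2 * n)) = 2 ∧
    orderOf ((r 1 : DihedralGroup (2 * n)) ^ 2 * sr 0) = 2 ∧
    orderOf ((r 1 : DihedralGroup (2 * n)) ^ 2) = n ∧
    (r 1 : DihedralGroup (2 * n)) ^ n * (r 1) ^ n * sr 0 * ((r 1) ^ 2 * sr 0) *
        (r 1) ^ 2 = 1 ∧
    Subgroup.closure
        ({(r 1 : DihedralGroup (2 * n)) ^ n, sr 0, (r 1) ^ 2 * sr 0, (r 1) ^ 2} :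
          Set (DihedralGroup (2 * n))) = ⊤ := by
  refine ⟨?_, orderOf_sr 0, orderOf_r_one_pow_mul_sr 2 0, ?_, ?_, ?_⟩
  · rw [orderOf_r_one_pow_of_dvd hodd.pos.ne' (dvd_mul_left n 2), Nat.mul_div_cancel _ hodd.pos]
  · rw [orderOf_r_one_pow_of_dvd two_ne_zero (dvd_mul_right 2 n),
      Nat.mul_div_cancel_left _ two_pos]
  · rw [← pow_add, ← two_mul, r_one_pow_n, one_mul,
      sr_zero_mul_r_one_pow_mul_sr_zero_mul_r_one_pow]
  · set S : Set (DihedralGroup (2 * n)) := {r 1 ^ n, sr 0, r 1 ^ 2 * sr 0, r 1 ^ 2}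
    have hr : r 1 ∈ Subgroup.closure S :=
      Subgroup.mem_of_sq_mem_of_pow_mem_of_odd hodd (Subgroup.subset_closure (by simp [S]))
        (Subgroup.subset_closure (by simp [S]))
    have hs : sr 0 ∈ Subgroup.closure S := Subgroup.subset_closure (by simp [S])
    rw [eq_top_iff, ← closure_r_one_sr_zero, Subgroup.closure_le]
    simp [Set.insert_subset_iff, hr, hs]

/-- For odd `n ≥ 3`, the tuple `(a^n, a^n, s, a^2 s, a^2)` is a generating
vector of `D_{2n}` of type `(0; 2,2,2,2,n)`. -/
theorem stmt_7 (n : ℕ) (hn : 3 ≤ n) (hodd : Odd n) :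
    orderOf ((r 1 : DihedralGroup (2 * n)) ^ n) = 2 ∧
    orderOf (sr 0 : DihedralGroup (2 * n)) = 2 ∧
    orderOf ((r 1 : DihedralGroup (2 * n)) ^ 2 * sr 0) = 2 ∧
    orderOf ((r 1 : DihedralGroup (2 * n)) ^ 2) = n ∧
    (r 1 : DihedralGroup (2 * n)) ^ n * (r 1) ^ n * sr 0 * ((r 1) ^ 2 * sr 0) *
        (r 1) ^ 2 = 1 ∧
    Subgroup.closure
        ({(r 1 : DihedralGroup (2 * n)) ^ n, sr 0, (r 1) ^ 2 * sr 0, (r 1) ^ 2} :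
          Set (DihedralGroup (2 * n))) = ⊤ :=
  stmt_7_general n hodd
end

section
/- Let p be an odd prime, and let χ_2, W_1 be complex characters of D_{2p} with values: χ_2(1)=1, χ_2(a^{2j})=1, χ_2(a^{2j−1})=−1, χ_2(a^p)=−1, χ_2(s)=1, χ_2(as)=−1; W_1(1)=p−1, W_1(a^{2j})=−1, W_1(a^{2j−1})=1 (for a^k ≠ 1, a^p), W_1(a^p)=−(p−1), W_1(s)=W_1(as)=0. Let ρ = χ_2 + 2W_1. Then (1/(8p)) Σ_{g∈D_{2p}} (ρ(g)² + ρ(g²)) = (3p−1)/2. -/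
open DihedralGroup

def dihEquiv (n : ℕ) : (ZMod n) ⊕ (ZMod n) ≃ DihedralGroup n where
  toFun := fun x => match x with | .inl j => .r j | .inr j => .sr j
  invFun := fun g => match g with | .r j => .inl j | .sr j => .inr j
  left_inv := by rintro (a|a) <;> rfl
  right_inv := by rintro (a|a) <;> rfl

/-- For `p` an odd prime, with `χ₂` and `W₁` the indicated characters of
`D_{2p}` and `ρ = χ₂ + 2·W₁`, Serre's formula gives
`(1/(8p)) Σ_{g ∈ D_{2p}} (ρ(g)² + ρ(g²)) = (3p-1)/2`. -/
theorem stmt_16 (p : ℕ) (hp : p.Prime) (hodd : Odd p) [NeZero (2 * p)]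
    (χ₂ W₁ : DihedralGroup (2 * p) → ℚ)
    (hχr : ∀ k : ZMod (2 * p), χ₂ (r k) = (-1) ^ k.val)
    (hχs : ∀ k : ZMod (2 * p), χ₂ (sr k) = (-1) ^ k.val)
    (hW1 : W₁ (r 0) = p - 1)
    (hWp : W₁ (r (p : ZMod (2 * p))) = -(p - 1))
    (hWr : ∀ k : ZMod (2 * p), k ≠ 0 → k ≠ (p : ZMod (2 * p)) →
      W₁ (r k) = (-1) ^ (k.val + 1))
    (hWs : ∀ k : ZMod (2 * p), W₁ (sr k) = 0) :
    (1 / (8 * p) : ℚ) *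
        ∑ g : DihedralGroup (2 * p),
          ((χ₂ g + 2 * W₁ g) ^ 2 + (χ₂ (g ^ 2) + 2 * W₁ (g ^ 2))) =
      (3 * p - 1) / 2 := by
  have hppos : 0 < p := hp.pos
  have hp3 : 3 ≤ p := by
    have h2 := hp.two_le
    obtain ⟨m, hm⟩ := hodd
    omega
  have hplt : p < 2 * p := by omega
  have hpval : ((p : ℕ) : ZMod (2 * p)).val = p := ZMod.val_natCast_of_lt hplt
  have hvz : ((0 : ZMod (2 * p))).val = 0 := ZMod.val_zero
  have hp0 : ((p : ℕ) : ZMod (2 * p)) ≠ 0 := by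
    intro h
    have := congrArg ZMod.val h
    rw [hpval, hvz] at this
    omega
  -- parity of (k+k).val
  have heven : ∀ k : ZMod (2 * p), (k + k).val % 2 = 0 := by
    intro k
    rw [ZMod.val_add]
    have : (k.val + k.val) % (2 * p) % 2 = (k.val + k.val) % 2 :=
      Nat.mod_mod_of_dvd _ ⟨p, rfl⟩
    omega
  have hkkp : ∀ k : ZMod (2 * p), k + k ≠ (p : ZMod (2 * p)) := by
    intro k h
    have := congrArg ZMod.val h
    rw [hpval] at this
    have h2 := heven k
    rw [this] at h2
    rcases hodd with ⟨m, hm⟩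
    omega
  have hkk0 : ∀ k : ZMod (2 * p), k ≠ 0 → k ≠ (p : ZMod (2 * p)) → k + k ≠ 0 := by
    intro k hk0 hkp h
    have hv : (k.val + k.val) % (2 * p) = 0 := by
      have := congrArg ZMod.val h
      rwa [ZMod.val_add, hvz] at this
    have hdvd : 2 * p ∣ k.val + k.val := Nat.dvd_of_mod_eq_zero hv
    obtain ⟨c, hc⟩ := hdvd
    have hklt : k.val < 2 * p := ZMod.val_lt k
    have hc' : k.val + k.val = 2 * (p * c) := by rw [hc]; ring
    have hpc : k.val = p * c := by omega
    have hc2 : c = 0 ∨ c = 1 := by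
      rcases Nat.lt_or_ge c 2 with h2 | h2
      · omega
      · exfalso; nlinarith
    have hback : ((k.val : ℕ) : ZMod (2 * p)) = k := ZMod.natCast_zmod_val k
    rcases hc2 with hc2 | hc2
    · apply hk0; rw [← hback]; simp [hpc, hc2]
    · apply hkp; rw [← hback, hpc, hc2, Nat.mul_one]
  -- square powers
  have hneg1sq : ∀ v : ℕ, ((-1 : ℚ) ^ v) ^ 2 = 1 := by
    intro v
    rcases Nat.even_or_odd v with h | h
    · rw [h.neg_one_pow]; norm_num
    · rw [h.neg_one_pow]; norm_num
  set F : DihedralGroup (2 * p) → ℚ :=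
    fun g => (χ₂ g + 2 * W₁ g) ^ 2 + (χ₂ (g ^ 2) + 2 * W₁ (g ^ 2)) with hF
  have hρ0 : χ₂ (r 0) + 2 * W₁ (r 0) = 2 * p - 1 := by
    rw [hχr, hW1, hvz]; ring
  have hsum : ∑ g : DihedralGroup (2 * p), F g = 12 * p ^ 2 - 4 * p := by
    rw [← Fintype.sum_equiv (dihEquiv (2 * p)) (fun x => F (dihEquiv (2 * p) x)) F
        (fun _ => rfl), Fintype.sum_sum_type]
    have hsr : ∀ k : ZMod (2 * p), F (dihEquiv (2 * p) (Sum.inr k)) = 2 * p := by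
      intro k
      show F (sr k) = 2 * p
      have hsq : (sr k : DihedralGroup (2 * p)) ^ 2 = r 0 := by
        rw [sq, sr_mul_sr, sub_self]
      rw [hF]
      simp only [hsq, hχs, hWs, hρ0]
      rw [mul_zero, add_zero, hneg1sq]
      ring
    have hr0 : F (dihEquiv (2 * p) (Sum.inl 0)) = (2 * p - 1) ^ 2 + (2 * p - 1) := by
      show F (r 0) = _
      have hsq : (r (0 : ZMod (2 * p))) ^ 2 = r 0 := by rw [sq, r_mul_r, add_zero]
      rw [hF]; simp only [hsq, hρ0]
    have hrp : F (dihEquiv (2 * p) (Sum.inl (p : ZMod (2 * p)))) =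
        (2 * p - 1) ^ 2 + (2 * p - 1) := by
      show F (r (p : ZMod (2 * p))) = _
      have hsq : (r ((p : ℕ) : ZMod (2 * p))) ^ 2 = r 0 := by
        rw [sq, r_mul_r, ← Nat.cast_add, show p + p = 2 * p by ring, ZMod.natCast_self]
      have hχp : χ₂ (r (p : ZMod (2 * p))) = -1 := by
        rw [hχr, hpval, hodd.neg_one_pow]
      rw [hF]
      simp only [hsq, hχp, hWp, hρ0]
      ring
    have hrk : ∀ k : ZMod (2 * p), k ∉ ({0, (p : ZMod (2 * p))} : Finset (ZMod (2 * p))) →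
        F (dihEquiv (2 * p) (Sum.inl k)) = 0 := by
      intro k hk
      simp only [Finset.mem_insert, Finset.mem_singleton, not_or] at hk
      obtain ⟨hk0, hkp⟩ := hk
      show F (r k) = 0
      have hsq : (r k : DihedralGroup (2 * p)) ^ 2 = r (k + k) := by rw [sq, r_mul_r]
      have he : Even ((k + k).val) := Nat.even_iff.mpr (heven k)
      rw [hF]
      simp only [hsq]
      rw [hχr, hWr k hk0 hkp, hχr, hWr (k + k) (hkk0 k hk0 hkp) (hkkp k)]
      have e1 : ((-1 : ℚ)) ^ ((k + k).val) = 1 := he.neg_one_pow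
      have e2 : ((-1 : ℚ)) ^ ((k + k).val + 1) = -1 := by rw [pow_succ, e1]; ring
      have e3 : ((-1 : ℚ)) ^ (k.val + 1) = -(-1) ^ k.val := by rw [pow_succ]; ring
      rw [e1, e2, e3]
      nlinarith [hneg1sq k.val]
    have hsub : ∑ k : ZMod (2 * p), F (dihEquiv (2 * p) (Sum.inl k)) =
        ∑ k ∈ ({0, (p : ZMod (2 * p))} : Finset (ZMod (2 * p))),
          F (dihEquiv (2 * p) (Sum.inl k)) := by
      exact (Finset.sum_subset (Finset.subset_univ _)
        (fun k _ hk => hrk k hk)).symm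
    rw [hsub, Finset.sum_pair (Ne.symm hp0), hr0, hrp]
    rw [Finset.sum_congr rfl (fun k _ => hsr k), Finset.sum_const, Finset.card_univ,
      ZMod.card]
    ring
  rw [hF] at hsum
  rw [hsum]
  have hpne : (p : ℚ) ≠ 0 := Nat.cast_ne_zero.mpr (by omega)
  field_simp
  ring
end
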